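/- Let $V$ be a finite-dimensional complex inner product space, let $H$ be a linear operator on $V$, and let $U, T$ be unitary operators on $V$ that both commute with $H$. Let $p, q$ be coprime integers with $q \ge 1$, and suppose $T U T^{-1} = e^{2\pi i p / q}\, U$. Then for every $\lambda \in \mathbb{C}$, the dimension of the $\lambda$-eigenspace of $H$ is divisible by $q$; in particular, every nonzero eigenspace of $H$ has dimension at least $q$. -/

import Mathlib

/-!
The λ-eigenspace `W` of `H` is preserved by `U` and `T`. Restricted to `W`, the relation
`T U T⁻¹ = ω U` with `ω = e^{2πip/q}` gives, on taking determinants,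
`det U|_W = ω ^ dim W * det U|_W`, so `ω ^ dim W = 1`. As `ω` is a primitive `q`-th root of
unity, `q ∣ dim W`.
-/

open Complex
open Module

namespace Module.End

variable {R M : Type*} [CommRing R] [AddCommGroup M] [Module R M]

theorem map_eigenspace_eq_of_comm {f : End R M} (e : M ≃ₗ[R] M) (h : f ∘ₗ e = e ∘ₗ f) (μ : R) :
    (f.eigenspace μ).map (e : M →ₗ[R] M) = f.eigenspace μ := by
  have hsymm : f ∘ₗ e.symm = e.symm ∘ₗ f := by
    ext v
    simpa using congrArg e.symm (LinearMap.congr_fun h (e.symm v)).symm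
  have stable : ∀ g : M ≃ₗ[R] M, f ∘ₗ g = g ∘ₗ f →
      (f.eigenspace μ).map (g : M →ₗ[R] M) ≤ f.eigenspace μ := fun g hg =>
    Submodule.map_le_iff_le_comap.mpr fun _ hv => mapsTo_genEigenspace_of_comm hg μ 1 hv
  refine le_antisymm (stable e h) ?_
  rw [Submodule.map_equiv_eq_comap_symm, ← Submodule.map_le_iff_le_comap]
  exact stable e.symm hsymm

end Module.End

theorem LinearEquiv.pow_finrank_eq_one_of_conj_eq_smul {R M : Type*} [CommRing R]
    [AddCommGroup M] [Module R M] [Module.Free R M] (A e : M ≃ₗ[R] M) (c : R)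
    (h : ∀ v, e (A (e.symm v)) = c • A v) : c ^ finrank R M = 1 := by
  have hmap : (e : M →ₗ[R] M) ∘ₗ (A : M →ₗ[R] M) ∘ₗ (e.symm : M →ₗ[R] M) = c • (A : M →ₗ[R] M) :=
    LinearMap.ext h
  have hdet := congrArg LinearMap.det hmap
  rw [LinearMap.det_conj, LinearMap.det_smul] at hdet
  exact (LinearEquiv.isUnit_det' A).mul_eq_right.mp hdet.symm

/-- if a linear operator `H` on a finite-dimensional complex inner
product space commutes with two unitaries `U, T` satisfying
`T U T⁻¹ = e^{2πip/q} U` with `p, q` coprime and `q ≥ 1`, then the dimension of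
every eigenspace of `H` is divisible by `q`; in particular every nonzero
eigenspace of `H` has dimension at least `q`. -/
theorem lsm_degeneracy_of_projective_symmetry
    {V : Type*} [NormedAddCommGroup V] [InnerProductSpace ℂ V]
    [FiniteDimensional ℂ V]
    (H : V →ₗ[ℂ] V) (U T : V ≃ₗᵢ[ℂ] V)
    (hUH : H ∘ₗ (U.toLinearEquiv : V →ₗ[ℂ] V)
      = (U.toLinearEquiv : V →ₗ[ℂ] V) ∘ₗ H)
    (hTH : H ∘ₗ (T.toLinearEquiv : V →ₗ[ℂ] V)
      = (T.toLinearEquiv : V →ₗ[ℂ] V) ∘ₗ H)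
    (p q : ℤ) (hq : 1 ≤ q) (hpq : IsCoprime p q)
    (h : ∀ v : V, T (U (T.symm v))
      = Complex.exp (2 * Real.pi * Complex.I * p / q) • U v) :
    ∀ lam : ℂ,
      (q : ℤ) ∣ (Module.finrank ℂ (Module.End.eigenspace H lam) : ℤ) ∧
      (Module.End.eigenspace H lam ≠ ⊥ →
        q ≤ (Module.finrank ℂ (Module.End.eigenspace H lam) : ℤ)) := by
  intro lam
  lift q to ℕ using by omega
  set W := Module.End.eigenspace H lam
  let U' := U.toLinearEquiv.ofSubmodules W W (End.map_eigenspace_eq_of_comm _ hUH lam)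
  let T' := T.toLinearEquiv.ofSubmodules W W (End.map_eigenspace_eq_of_comm _ hTH lam)
  have hconj : ∀ w : W, T' (U' (T'.symm w)) = exp (2 * Real.pi * I * (p / q)) • U' w := fun w =>
    Subtype.ext <| by simpa [U', T', mul_div_assoc] using h w
  have hdvd : q ∣ finrank ℂ W :=
    ((isPrimitiveRoot_exp_of_isCoprime p q (by omega) hpq).pow_eq_one_iff_dvd _).mp
      (U'.pow_finrank_eq_one_of_conj_eq_smul T' _ hconj)
  refine ⟨mod_cast hdvd, fun hW => mod_cast Nat.le_of_dvd ?_ hdvd⟩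
  exact Nat.pos_of_ne_zero (mt Submodule.finrank_eq_zero.mp hW)
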